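/- Let p ≥ 1 be an integer and γ ∈ ℝ^p. For all bitstrings s, t ∈ {0,1}^{2p+1} with L(s) ≤ L(t), one has φ(γ, F(s) ⊕ t) = φ(γ, s ⊕ t), where ⊕ denotes bitwise XOR. -/
import Mathlib

open Complex Finset

namespace QAOA

abbrev BS (p : ℕ) := Fin (2*p+1) → ZMod 2

def bit (p : ℕ) (s : BS p) (j : ℕ) : ZMod 2 := s ⟨j % (2*p+1), Nat.mod_lt _ (by omega)⟩

/-- Level of symmetry. -/
def L (p : ℕ) (s : BS p) : ℕ :=
  Nat.findGreatest (fun j => ∀ k ≤ j, bit p s (p + k) = bit p s (p - k)) p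

/-- Partial flip. -/
def pflip (p : ℕ) (s : BS p) : BS p :=
  fun j => if p - L p s ≤ (j : ℕ) ∧ (j : ℕ) ≤ p + L p s then s j + 1 else s j

def IsOdd (p : ℕ) (s : BS p) : Prop := bit p s 0 ≠ bit p s p

instance (p : ℕ) : DecidablePred (IsOdd p) := fun s => by unfold IsOdd; infer_instance

/-- (−1)^{1[s odd]} as a complex number. -/
noncomputable def sgn (p : ℕ) (s : BS p) : ℂ := if IsOdd p s then -1 else 1

/-- (−1)^b for a bit b. -/
noncomputable def sgnR (b : ZMod 2) : ℝ := if b = 0 then 1 else -1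

noncomputable def B (p : ℕ) (β : Fin p → ℝ) (s : BS p) : ℂ :=
  ∏ j : Fin p,
    ((Real.cos (β j / 2) : ℂ) ^
      ((if bit p s (j : ℕ) = bit p s ((j : ℕ) + 1) then 1 else 0) +
       (if bit p s (2*p - (j : ℕ)) = bit p s (2*p - (j : ℕ) - 1) then 1 else 0)) *
     (Complex.I * (Real.sin (β j / 2) : ℂ)) ^
      ((if bit p s (j : ℕ) ≠ bit p s ((j : ℕ) + 1) then 1 else 0) +
       (if bit p s (2*p - (j : ℕ)) ≠ bit p s (2*p - (j : ℕ) - 1) then 1 else 0)))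

noncomputable def phi (p : ℕ) (γ : Fin p → ℝ) (s : BS p) : ℝ :=
  ∑ j : Fin p, γ j / 2 * (sgnR (bit p s (2*p - (j : ℕ))) - sgnR (bit p s (j : ℕ)))

lemma bit_eq (p : ℕ) (s : BS p) (m : ℕ) (hm : m ≤ 2*p) :
    bit p s m = s ⟨m, by omega⟩ := by
  unfold bit; congr 1; exact Fin.ext (Nat.mod_eq_of_lt (by omega))

lemma bit_add (p : ℕ) (s t : BS p) (m : ℕ) : bit p (s + t) m = bit p s m + bit p t m := rfl

lemma bit_pflip (p : ℕ) (s : BS p) (m : ℕ) (hm : m ≤ 2*p) :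
    bit p (pflip p s) m =
      if p - L p s ≤ m ∧ m ≤ p + L p s then bit p s m + 1 else bit p s m := by
  rw [bit_eq _ _ _ hm, bit_eq _ _ _ hm]
  unfold pflip
  simp

lemma L_le (p : ℕ) (s : BS p) : L p s ≤ p := Nat.findGreatest_le p

lemma Lspec (p : ℕ) (s : BS p) : ∀ k ≤ L p s, bit p s (p + k) = bit p s (p - k) := by
  have h0 : ∀ k ≤ 0, bit p s (p + k) = bit p s (p - k) := by
    intro k hk
    obtain rfl : k = 0 := Nat.le_zero.mp hk
    norm_num
  exact Nat.findGreatest_spec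
    (P := fun j => ∀ k ≤ j, bit p s (p + k) = bit p s (p - k)) (Nat.zero_le p) h0

/-- if `L(s) ≤ L(t)` then `φ(γ, F(s) ⊕ t) = φ(γ, s ⊕ t)`
(bitwise XOR is addition in `ZMod 2`). -/
theorem stmt_2 (p : ℕ) (hp : 1 ≤ p) (γ : Fin p → ℝ) (s t : BS p) (h : L p s ≤ L p t) :
    phi p γ (pflip p s + t) = phi p γ (s + t) := by
  unfold phi
  apply Finset.sum_congr rfl
  intro j _
  have hj : (j : ℕ) < p := j.isLt
  have hLs := L_le p s
  have hLt := L_le p t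
  by_cases hc : p - L p s ≤ (j : ℕ)
  · -- flipped case: both bits equal, term is zero on both sides
    have hk : p - (j : ℕ) ≤ L p s := by omega
    have hs := Lspec p s (p - (j : ℕ)) hk
    have ht := Lspec p t (p - (j : ℕ)) (le_trans hk h)
    have hpk : p + (p - (j : ℕ)) = 2*p - (j : ℕ) := by omega
    have hpm : p - (p - (j : ℕ)) = (j : ℕ) := by omega
    rw [hpk, hpm] at hs ht
    have h1 : bit p (s + t) (2*p - (j : ℕ)) = bit p (s + t) (j : ℕ) := by
      rw [bit_add, bit_add, hs, ht]
    have h2 : bit p (pflip p s + t) (2*p - (j : ℕ)) = bit p (pflip p s + t) (j : ℕ) := by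
      rw [bit_add, bit_add, bit_pflip _ _ _ (by omega), bit_pflip _ _ _ (by omega),
        if_pos ⟨by omega, by omega⟩, if_pos ⟨by omega, by omega⟩, hs, ht]
    rw [h1, h2, sub_self, sub_self]
  · -- unflipped case: bits unchanged
    have h1 : bit p (pflip p s) (2*p - (j : ℕ)) = bit p s (2*p - (j : ℕ)) := by
      rw [bit_pflip _ _ _ (by omega), if_neg (by omega)]
    have h2 : bit p (pflip p s) (j : ℕ) = bit p s (j : ℕ) := by
      rw [bit_pflip _ _ _ (by omega), if_neg (by omega)]
    rw [bit_add, bit_add, h1, h2, ← bit_add, ← bit_add]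

end QAOA
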